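/- Conditional unbiasedness of the aggregate AIPW score for the treated group: suppose unconfoundedness holds at every t ∈ {1,…,J}, let ē := Σ_{t=1}^J e_t (so ē = P({D = 1} | A) > 0), and let c be any real number. Then E[ c + D·(Y − c)/ē | A ] = Σ_{t=1}^J e_t·m_t / ē. -/

import Mathlib

/-! On `{T = t}` with `t ≥ 1` the score is `c + (Y_t - c) / ē`, and conditioning on `A` gives
`E[1{T = t} (Y_t - c) | A] = e_t (μ̄_t - c) = e_t (m_t - c)` by unconfoundedness. Summing over
`t = 1, …, J`, the terms `- e_t c` add up to `- ē c` and cancel the constant `c`. -/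

open MeasureTheory ProbabilityTheory Finset

section Conditioning

variable {Ω : Type*} [MeasurableSpace Ω] {μ : Measure Ω} {A s : Set Ω}

theorem MeasureTheory.Integrable.cond {E : Type*} [NormedAddCommGroup E] {f : Ω → E}
    (hf : Integrable f μ) (s : Set Ω) : Integrable f μ[|s] := by
  rcases eq_or_ne (μ s) 0 with h | h
  · simp [cond_eq_zero_of_meas_eq_zero h]
  · exact hf.restrict.smul_measure (ENNReal.inv_ne_top.2 h)

theorem integral_indicator_eq_measureReal_mul_integral_cond [IsFiniteMeasure μ]
    (hs : MeasurableSet s) (f : Ω → ℝ) :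
    ∫ ω, s.indicator f ω ∂μ = μ.real s * ∫ ω, f ω ∂μ[|s] := by
  rcases eq_or_ne (μ s) 0 with h | h
  · simp [integral_indicator hs, Measure.restrict_eq_zero.2 h, measureReal_def, h]
  · rw [integral_indicator hs, ProbabilityTheory.cond, integral_smul_measure, smul_eq_mul,
      ← mul_assoc, measureReal_def, ← ENNReal.toReal_mul,
      ENNReal.mul_inv_cancel h (measure_ne_top _ _), ENNReal.toReal_one, one_mul]

theorem integral_indicator_sub_const_cond [IsFiniteMeasure μ] (hA : MeasurableSet A)
    (hs : MeasurableSet s) {f : Ω → ℝ} (hf : Integrable f μ) (hAs : μ (A ∩ s) ≠ 0) (c : ℝ) :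
    ∫ ω, s.indicator (fun ω ↦ f ω - c) ω ∂μ[|A] = μ[|A].real s * (∫ ω, f ω ∂μ[|A ∩ s] - c) := by
  have : IsProbabilityMeasure μ[|A ∩ s] := cond_isProbabilityMeasure hAs
  rw [integral_indicator_eq_measureReal_mul_integral_cond hs, cond_cond_eq_cond_inter hA hs,
    integral_sub (hf.cond _) (integrable_const c), integral_const, probReal_univ, one_smul]

end Conditioning

theorem ite_ne_zero_mul_eq_sum_indicator {Ω : Type*} {T : Ω → ℕ} {J : ℕ} (g : ℕ → Ω → ℝ)
    {ω : Ω} (hω : T ω ≤ J) :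
    (if T ω ≠ 0 then (1 : ℝ) else 0) * g (T ω) ω
      = ∑ t ∈ Icc 1 J, {ω | T ω = t}.indicator (g t) ω := by
  simp only [Set.indicator_apply, Set.mem_ofPred_eq]
  rw [sum_ite_eq]
  by_cases h : T ω = 0 <;> simp [h, hω, Nat.one_le_iff_ne_zero]

theorem add_sum_mul_sub_div_sum {ι : Type*} (s : Finset ι) (e m : ι → ℝ) (c : ℝ)
    (h : ∑ i ∈ s, e i ≠ 0) :
    c + (∑ i ∈ s, e i * (m i - c)) / ∑ i ∈ s, e i = (∑ i ∈ s, e i * m i) / ∑ i ∈ s, e i := by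
  simp only [mul_sub, sum_sub_distrib, ← sum_mul]
  field_simp
  ring

theorem aggregate_aipw_score_conditionally_unbiased_general
    {Ω : Type*} [MeasurableSpace Ω] (P : Measure Ω) [IsProbabilityMeasure P]
    (J : ℕ) (hJ : 1 ≤ J)
    (T : Ω → ℕ) (hT : Measurable T) (hTle : ∀ ω, T ω ≤ J)
    (Y : ℕ → Ω → ℝ) (hYint : ∀ t, Integrable (Y t) P)
    (A : Set Ω) (hA : MeasurableSet A)
    (hpos : ∀ t ≤ J, 0 < P (A ∩ {ω | T ω = t}))
    (Yobs : Ω → ℝ)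
    (hYobs : ∀ ω, Yobs ω = ∑ t ∈ Finset.range (J + 1), if T ω = t then Y t ω else 0)
    (e : ℕ → ℝ) (he : ∀ t, e t = ((P[|A]) {ω | T ω = t}).toReal)
    (m : ℕ → ℝ)
    (μbar : ℕ → ℝ)
    (hμbar : ∀ t, μbar t = ∫ ω, Y t ω ∂(P[|(A ∩ {ω | T ω = t})]))
    (hunconf : ∀ t, 1 ≤ t → t ≤ J → μbar t = m t)
    (ebar : ℝ) (hebar : ebar = ∑ t ∈ Finset.Icc 1 J, e t)
    (c : ℝ) :
    ∫ ω, (c + (if T ω ≠ 0 then (1 : ℝ) else 0) * (Yobs ω - c) / ebar) ∂(P[|A])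
      = (∑ t ∈ Finset.Icc 1 J, e t * m t) / ebar := by
  have hs (t : ℕ) : MeasurableSet {ω | T ω = t} := hT (measurableSet_singleton t)
  have : IsProbabilityMeasure P[|A] :=
    cond_isProbabilityMeasure (measure_pos_of_superset Set.inter_subset_left (hpos 1 hJ).ne').ne'
  have he_pos : ∀ t ∈ Icc 1 J, 0 < e t := fun t ht ↦ by
    rw [he]
    exact ENNReal.toReal_pos (cond_pos_of_inter_ne_zero hA (hpos t (mem_Icc.1 ht).2).ne').ne'
      (measure_ne_top _ _)
  have hsum_ne : ∑ t ∈ Icc 1 J, e t ≠ 0 := (sum_pos he_pos ⟨1, mem_Icc.2 ⟨le_rfl, hJ⟩⟩).ne'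
  set g : ℕ → Ω → ℝ := fun t ω ↦ {ω | T ω = t}.indicator (fun ω ↦ Y t ω - c) ω
  have hg_int (t : ℕ) : Integrable (g t) P[|A] :=
    (((hYint t).cond A).sub (integrable_const c)).indicator (hs t)
  have hscore (ω : Ω) :
      (if T ω ≠ 0 then (1 : ℝ) else 0) * (Yobs ω - c) = ∑ t ∈ Icc 1 J, g t ω := by
    have hobs : Yobs ω = Y (T ω) ω := by simp [hYobs, hTle ω]
    rw [hobs]
    exact ite_ne_zero_mul_eq_sum_indicator (fun t ω ↦ Y t ω - c) (hTle ω)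
  have hterm : ∀ t ∈ Icc 1 J, ∫ ω, g t ω ∂P[|A] = e t * (m t - c) := fun t ht ↦ by
    obtain ⟨h1t, htJ⟩ := mem_Icc.1 ht
    rw [integral_indicator_sub_const_cond hA (hs t) (hYint t) (hpos t htJ).ne', ← hμbar,
      hunconf t h1t htJ, he, measureReal_def]
  simp_rw [hscore]
  rw [integral_add (integrable_const c) ((integrable_finsetSum _ fun t _ ↦ hg_int t).div_const _),
    integral_const, probReal_univ, one_smul, integral_div,
    integral_finsetSum _ fun t _ ↦ hg_int t, sum_congr rfl hterm, hebar]
  exact add_sum_mul_sub_div_sum _ e m c hsum_ne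

/-- Conditional unbiasedness of the aggregate AIPW score for the treated
group: `E[c + D·(Y − c)/ē | A] = Σ_{t=1}^J e_t·m_t / ē`, where `ē = Σ_{t=1}^J e_t`,
under unconfoundedness at every `t ∈ {1,…,J}`. -/
theorem aggregate_aipw_score_conditionally_unbiased
    {Ω : Type*} [MeasurableSpace Ω] (P : Measure Ω) [IsProbabilityMeasure P]
    (J : ℕ) (hJ : 1 ≤ J)
    (T : Ω → ℕ) (hT : Measurable T) (hTle : ∀ ω, T ω ≤ J)
    (Y : ℕ → Ω → ℝ) (hYmeas : ∀ t, Measurable (Y t)) (hYint : ∀ t, Integrable (Y t) P)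
    (A : Set Ω) (hA : MeasurableSet A)
    (hpos : ∀ t ≤ J, 0 < P (A ∩ {ω | T ω = t}))
    (Yobs : Ω → ℝ)
    (hYobs : ∀ ω, Yobs ω = ∑ t ∈ Finset.range (J + 1), if T ω = t then Y t ω else 0)
    (e : ℕ → ℝ) (he : ∀ t, e t = ((P[|A]) {ω | T ω = t}).toReal)
    (m : ℕ → ℝ) (hm : ∀ t, m t = ∫ ω, Y t ω ∂(P[|A]))
    (μbar : ℕ → ℝ)
    (hμbar : ∀ t, μbar t = ∫ ω, Y t ω ∂(P[|(A ∩ {ω | T ω = t})]))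
    (hunconf : ∀ t, 1 ≤ t → t ≤ J → μbar t = m t)
    (ebar : ℝ) (hebar : ebar = ∑ t ∈ Finset.Icc 1 J, e t)
    (c : ℝ) :
    ∫ ω, (c + (if T ω ≠ 0 then (1 : ℝ) else 0) * (Yobs ω - c) / ebar) ∂(P[|A])
      = (∑ t ∈ Finset.Icc 1 J, e t * m t) / ebar :=
  aggregate_aipw_score_conditionally_unbiased_general P J hJ T hT hTle Y hYint A hA hpos Yobs hYobs
    e he m μbar hμbar hunconf ebar hebar c
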